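/- arXiv:2504.09127 — 3 statements merged into one kernel-verified Lean document; each statement's English description precedes it below -/
import Mathlib

section
/- Suppose f : (0,∞) → ℝ is continuous with f(r) ~ C·r^α as r → 0 and f(r) ~ C'·r^β as r → ∞, with -N < α, α + 2 < 0, and β > -2. If g is a radial solution of the inhomogeneous equation Δg = f (radial: g'' + ((N-1)/r) g' = f) given by g(r) = ∫₁^r s^{1-N} ∫₀^s ρ^{N-1} f(ρ) dρ ds, then g(r) = O(r^{α+2}) as r → 0. -/
open Real Filter Topology Asymptotics MeasureTheory

/-!
Near `0` the forcing is `O(ρ^α)`, so the inner integrand `ρ^(N-1) f ρ` is `O(ρ^(N-1+α))`; as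
`N - 1 + α > -1` the inner integral converges at `0` and is `O(s^(N+α))`. Hence the outer
integrand is `O(s^(α+1))`, and since `α + 1 < -1` its integral from `r` to a fixed point is
dominated by the divergent contribution near `r`, which is `O(r^(α+2))`.
-/

open Set intervalIntegral

variable {E : Type*} [NormedAddCommGroup E]

lemma exists_norm_le_rpow_of_isBigO {φ : ℝ → E} {γ b : ℝ} (hφ : φ =O[𝓝[>] 0] (· ^ γ))
    (hb : 0 < b) : ∃ c ≥ 0, ∃ ε ∈ Ioo 0 b, ∀ ρ ∈ Ioc 0 ε, ‖φ ρ‖ ≤ c * ρ ^ γ := by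
  obtain ⟨c, hc, hφc⟩ := hφ.exists_pos
  obtain ⟨u, hu, hsub⟩ := mem_nhdsGT_iff_exists_Ioo_subset.1 hφc.bound
  refine ⟨c, hc.le, min (u / 2) (b / 2), ⟨lt_min (half_pos hu) (half_pos hb),
    (min_le_right _ _).trans_lt (half_lt_self hb)⟩, fun ρ hρ => ?_⟩
  have hρu : ρ < u := hρ.2.trans_lt ((min_le_left _ _).trans_lt (half_lt_self hu))
  simpa only [mem_ofPred_eq, norm_of_nonneg (rpow_nonneg hρ.1.le γ)] using hsub ⟨hρ.1, hρu⟩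

lemma norm_integral_le_mul_integral_rpow [NormedSpace ℝ E] {φ : ℝ → E} {a b c γ : ℝ} (hab : a ≤ b)
    (hγ : -1 < γ ∨ γ ≠ -1 ∧ (0 : ℝ) ∉ uIcc a b) (hφ : ∀ ρ ∈ Ioc a b, ‖φ ρ‖ ≤ c * ρ ^ γ) :
    ‖∫ ρ in a..b, φ ρ‖ ≤ c * ((b ^ (γ + 1) - a ^ (γ + 1)) / (γ + 1)) := by
  have hint : IntervalIntegrable (· ^ γ) volume a b :=
    hγ.elim intervalIntegrable_rpow' fun h => intervalIntegrable_rpow (Or.inr h.2)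
  calc ‖∫ ρ in a..b, φ ρ‖ ≤ ∫ ρ in a..b, c * ρ ^ γ :=
        norm_integral_le_of_norm_le hab (ae_of_all _ hφ) (hint.const_mul c)
    _ = c * ((b ^ (γ + 1) - a ^ (γ + 1)) / (γ + 1)) := by
        rw [intervalIntegral.integral_const_mul, integral_rpow hγ]

lemma Asymptotics.IsBigO.rpow_mul_nhdsGT_zero {f : ℝ → ℝ} {a b : ℝ}
    (hf : f =O[𝓝[>] 0] (· ^ b)) : (fun x => x ^ a * f x) =O[𝓝[>] 0] (· ^ (a + b)) :=
  ((isBigO_refl (· ^ a) _).mul hf).trans_eventuallyEq <|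
    eventually_mem_nhdsWithin.mono fun _ hx => (rpow_add hx a b).symm

lemma intervalIntegrable_zero_of_isBigO_rpow {φ : ℝ → E} {γ b : ℝ} (hγ : -1 < γ) (hb : 0 < b)
    (hφ : φ =O[𝓝[>] 0] (· ^ γ)) (hcont : ContinuousOn φ (Ioc 0 b)) :
    IntervalIntegrable φ volume 0 b := by
  obtain ⟨c, -, ε, hε, hbound⟩ := exists_norm_le_rpow_of_isBigO hφ hb
  have hnear : IntervalIntegrable φ volume 0 ε := by
    refine ((intervalIntegrable_rpow' hγ).const_mul c).mono_fun' ?_ ?_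
    · rw [uIoc_of_le hε.1.le]
      exact (hcont.mono (Ioc_subset_Ioc_right hε.2.le)).aestronglyMeasurable measurableSet_Ioc
    · rw [uIoc_of_le hε.1.le]
      exact (ae_restrict_iff' measurableSet_Ioc).2 (ae_of_all _ hbound)
  have hfar : IntervalIntegrable φ volume ε b :=
    (hcont.mono <| ordConnected_Ioc.uIcc_subset ⟨hε.1, hε.2.le⟩ ⟨hb, le_rfl⟩).intervalIntegrable
  exact hnear.trans hfar

lemma integral_zero_isBigO_rpow [NormedSpace ℝ E] {φ : ℝ → E} {γ : ℝ} (hγ : -1 < γ)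
    (hφ : φ =O[𝓝[>] 0] (· ^ γ)) : (fun s => ∫ ρ in 0..s, φ ρ) =O[𝓝[>] 0] (· ^ (γ + 1)) := by
  obtain ⟨c, -, ε, hε, hbound⟩ := exists_norm_le_rpow_of_isBigO hφ one_pos
  refine IsBigO.of_bound (c / (γ + 1)) ?_
  filter_upwards [Ioo_mem_nhdsGT hε.1] with s hs
  have hs_bound := norm_integral_le_mul_integral_rpow hs.1.le (Or.inl hγ)
    fun ρ hρ => hbound ρ ⟨hρ.1, hρ.2.trans hs.2.le⟩
  rw [zero_rpow (by linarith), sub_zero] at hs_bound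
  rw [norm_of_nonneg (rpow_nonneg hs.1.le _)]
  exact hs_bound.trans_eq (by ring)

lemma integral_isBigO_rpow_of_lt_neg_one [NormedSpace ℝ E] {h : ℝ → E} {δ b : ℝ} (hδ : δ < -1) (hb : 0 < b)
    (hh : h =O[𝓝[>] 0] (· ^ δ)) (hcont : ContinuousOn h (Ioc 0 b)) :
    (fun r => ∫ s in b..r, h s) =O[𝓝[>] 0] (· ^ (δ + 1)) := by
  obtain ⟨c, hc, ε, hε, hbound⟩ := exists_norm_le_rpow_of_isBigO hh hb
  have hint : ∀ x ∈ Ioc 0 b, ∀ y ∈ Ioc 0 b, IntervalIntegrable h volume x y := fun x hx y hy =>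
    (hcont.mono (ordConnected_Ioc.uIcc_subset hx hy)).intervalIntegrable
  have hεmem : ε ∈ Ioc 0 b := ⟨hε.1, hε.2.le⟩
  have hsplit : (fun r => ∫ s in b..r, h s) =ᶠ[𝓝[>] 0]
      fun r => (∫ s in b..ε, h s) + ∫ s in ε..r, h s := by
    filter_upwards [Ioo_mem_nhdsGT hε.1] with r hr
    exact (integral_add_adjacent_intervals (hint b ⟨hb, le_rfl⟩ ε hεmem)
      (hint ε hεmem r ⟨hr.1, hr.2.le.trans hεmem.2⟩)).symm
  -- the integral over `[ε, b]` is a constant, negligible against `r ^ (δ + 1) → ∞`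
  have hconst : (fun _ : ℝ => ∫ s in b..ε, h s) =O[𝓝[>] 0] (· ^ (δ + 1)) :=
    (isBigO_const_const _ one_ne_zero _).trans <| IsLittleO.isBigO <| (isLittleO_one_left_iff ℝ).2 <|
      tendsto_norm_atTop_atTop.comp (tendsto_rpow_neg_nhdsGT_zero (by linarith))
  have hnear : (fun r => ∫ s in ε..r, h s) =O[𝓝[>] 0] (· ^ (δ + 1)) := by
    refine IsBigO.of_bound (c / -(δ + 1)) ?_
    filter_upwards [Ioo_mem_nhdsGT hε.1] with r hr
    have hr0 : (0 : ℝ) ∉ uIcc r ε := by simp [uIcc_of_le hr.2.le, hr.1.not_ge]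
    calc ‖∫ s in ε..r, h s‖ = ‖∫ s in r..ε, h s‖ := by rw [integral_symm, norm_neg]
      _ ≤ c * ((ε ^ (δ + 1) - r ^ (δ + 1)) / (δ + 1)) :=
          norm_integral_le_mul_integral_rpow hr.2.le (Or.inr ⟨by linarith, hr0⟩)
            fun ρ hρ => hbound ρ ⟨hr.1.trans hρ.1, hρ.2⟩
      _ = c / -(δ + 1) * (r ^ (δ + 1) - ε ^ (δ + 1)) := by
          have : δ + 1 ≠ 0 := by linarith
          field_simp
          ring
      _ ≤ c / -(δ + 1) * r ^ (δ + 1) :=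
          mul_le_mul_of_nonneg_left (sub_le_self _ (rpow_nonneg hε.1.le _))
            (div_nonneg hc (by linarith))
      _ = c / -(δ + 1) * ‖r ^ (δ + 1)‖ := by rw [norm_of_nonneg (rpow_nonneg hr.1.le _)]
  exact (hconst.add hnear).congr' hsplit.symm EventuallyEq.rfl

theorem stmt6_general (N : ℕ) (f : ℝ → ℝ) (hf : ContinuousOn f (Set.Ioi 0))
    (α C : ℝ) (hα1 : -(N : ℝ) < α) (hα2 : α + 2 < 0)
    (h0 : Tendsto (fun r : ℝ => f r / r ^ α) (𝓝[>] 0) (𝓝 C)) :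
    (fun r : ℝ =>
        ∫ s in (1 : ℝ)..r, s ^ (1 - (N : ℝ)) * ∫ ρ in (0 : ℝ)..s, ρ ^ ((N : ℝ) - 1) * f ρ)
      =O[𝓝[>] 0] fun r : ℝ => r ^ (α + 2) := by
  have hf0 : f =O[𝓝[>] 0] (· ^ α) := isBigO_of_div_tendsto_nhds
    (eventually_mem_nhdsWithin.mono fun r hr h => absurd h (rpow_pos_of_pos hr α).ne') C h0
  have hφ := hf0.rpow_mul_nhdsGT_zero (a := (N : ℝ) - 1)
  have hφcont : ContinuousOn (fun ρ : ℝ => ρ ^ ((N : ℝ) - 1) * f ρ) (Ioi 0) :=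
    (continuousOn_id.rpow_const fun _ hx => Or.inl (ne_of_gt hx)).mul hf
  have hFcont : ContinuousOn (fun s => ∫ ρ in (0 : ℝ)..s, ρ ^ ((N : ℝ) - 1) * f ρ) (Icc 0 1) := by
    simpa using continuousOn_primitive_interval' (intervalIntegrable_zero_of_isBigO_rpow
      (by linarith) one_pos hφ (hφcont.mono Ioc_subset_Ioi_self)) left_mem_uIcc
  have hg := (integral_zero_isBigO_rpow (by linarith) hφ).rpow_mul_nhdsGT_zero (a := 1 - N)
  rw [show 1 - (N : ℝ) + ((N : ℝ) - 1 + α + 1) = α + 1 by ring] at hg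
  have hgcont := (continuousOn_id.rpow_const (p := 1 - (N : ℝ)) fun _ hx =>
    Or.inl (ne_of_gt hx.1)).mul (hFcont.mono Ioc_subset_Icc_self)
  simpa [show α + 1 + 1 = α + 2 by ring] using
    integral_isBigO_rpow_of_lt_neg_one (by linarith) one_pos hg hgcont

/-- If `f ~ C r^α` at `0` and `f ~ C' r^β` at `∞`, with `-N < α`, `α + 2 < 0`, `β > -2`,
then the double-integral solution of the radial Poisson equation `Δg = f` is `O(r^{α+2})`
as `r → 0`. -/
theorem stmt6 (N : ℕ) (hN : 3 ≤ N) (f : ℝ → ℝ) (hf : ContinuousOn f (Set.Ioi 0))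
    (α β C C' : ℝ) (hα1 : -(N : ℝ) < α) (hα2 : α + 2 < 0) (hβ : -2 < β)
    (h0 : Tendsto (fun r : ℝ => f r / r ^ α) (𝓝[>] 0) (𝓝 C))
    (hinf : Tendsto (fun r : ℝ => f r / r ^ β) atTop (𝓝 C')) :
    (fun r : ℝ =>
        ∫ s in (1 : ℝ)..r, s ^ (1 - (N : ℝ)) * ∫ ρ in (0 : ℝ)..s, ρ ^ ((N : ℝ) - 1) * f ρ)
      =O[𝓝[>] 0] fun r : ℝ => r ^ (α + 2) :=
  stmt6_general N f hf α C hα1 hα2 h0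
end

section
/- Hardy-type inequality for the logarithmically weighted dyadic norms: there is a constant C = C(N) such that for all radial functions v on ℝ^N vanishing at infinity, ‖v‖_{Z_{-2}} ≤ C ‖∂_r v‖_{Z_{-3}}, where ‖f‖_{Z_α} = sup_{R>0} (R^{-N/2-α}/⟨log R⟩) (∫_{R<|x|<2R} f² dx)^{1/2}. -/
/-!
On a dyadic interval `[a, 2a]`, the fundamental theorem of calculus and Cauchy–Schwarz against
the weight `r^(N-1)` turn the `Z_{-3}` bound on `∂_r v` into `|v(2a) - v(a)| ≤ M ⟨log a⟩ a⁻²`.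
Since `⟨log (2ᵏa)⟩ ≤ 2ᵏ ⟨log a⟩` while `(2ᵏa)⁻² = 4⁻ᵏ a⁻²`, these increments decay like `2⁻ᵏ`,
so telescoping from `a` to infinity, where `v` vanishes, gives `|v(a)| ≤ 2M ⟨log a⟩ a⁻²`.
Integrating this pointwise bound over `[R, 2R]` gives the `Z_{-2}` bound.
-/

open Real Filter Topology MeasureTheory Set

lemma one_le_sqrt_one_add_sq (x : ℝ) : 1 ≤ √(1 + x ^ 2) :=
  Real.one_le_sqrt.2 (by nlinarith [sq_nonneg x])

lemma sqrt_one_add_sq_le_add_abs_sub (x y : ℝ) : √(1 + y ^ 2) ≤ √(1 + x ^ 2) + |y - x| := by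
  have hx : |x| ≤ √(1 + x ^ 2) := Real.abs_le_sqrt (by nlinarith)
  have hsq : √(1 + x ^ 2) ^ 2 = 1 + x ^ 2 := Real.sq_sqrt (by positivity)
  refine Real.sqrt_le_iff.2 ⟨by positivity, ?_⟩
  have hxy : x * (y - x) ≤ √(1 + x ^ 2) * |y - x| := calc
    x * (y - x) ≤ |x| * |y - x| := (le_abs_self _).trans (abs_mul _ _).le
    _ ≤ √(1 + x ^ 2) * |y - x| := by gcongr
  nlinarith [sq_abs (y - x)]

lemma sqrt_one_add_log_sq_le_two_pow_mul {a r : ℝ} (ha : 0 < a) (har : a ≤ r) {k : ℕ}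
    (hr : r ≤ 2 ^ k * a) : √(1 + log r ^ 2) ≤ 2 ^ k * √(1 + log a ^ 2) := by
  have hlog : |log r - log a| ≤ k := by
    have h2 : log r ≤ log a + k * log 2 := by
      simpa [log_mul, log_pow, ha.ne', add_comm] using log_le_log (ha.trans_le har) hr
    rw [abs_of_nonneg (sub_nonneg.2 (log_le_log ha har))]
    nlinarith [log_two_lt_d9, (Nat.cast_nonneg k : (0:ℝ) ≤ k)]
  have hk : (1 + k : ℝ) ≤ 2 ^ k := by
    have : k + 1 ≤ 2 ^ k := Nat.lt_two_pow_self
    exact_mod_cast add_comm 1 k ▸ this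
  have h1 := one_le_sqrt_one_add_sq (log a)
  calc √(1 + log r ^ 2) ≤ √(1 + log a ^ 2) + k :=
        (sqrt_one_add_sq_le_add_abs_sub _ _).trans (by linarith)
    _ ≤ (1 + k) * √(1 + log a ^ 2) := by nlinarith [(Nat.cast_nonneg k : (0:ℝ) ≤ k)]
    _ ≤ 2 ^ k * √(1 + log a ^ 2) := by gcongr

lemma integral_abs_mul_abs_le_sqrt_mul_sqrt {f g : ℝ → ℝ} {a b : ℝ} (hab : a ≤ b)
    (hf : ContinuousOn f (Icc a b)) (hg : ContinuousOn g (Icc a b)) :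
    ∫ x in a..b, |f x| * |g x| ≤ √(∫ x in a..b, f x ^ 2) * √(∫ x in a..b, g x ^ 2) := by
  have memLp_two : ∀ h : ℝ → ℝ, ContinuousOn h (Icc a b) →
      MemLp h (ENNReal.ofReal 2) (volume.restrict (Ioc a b)) := fun h hh => by
    rw [ENNReal.ofReal_ofNat, memLp_two_iff_integrable_sq
      ((hh.mono Ioc_subset_Icc_self).aestronglyMeasurable measurableSet_Ioc)]
    exact ((hh.pow 2).integrableOn_Icc).mono_set Ioc_subset_Icc_self
  have key := integral_mul_norm_le_Lp_mul_Lq Real.HolderConjugate.two_two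
    (memLp_two f hf) (memLp_two g hg)
  simp only [intervalIntegral.integral_of_le hab, Real.sqrt_eq_rpow]
  simpa only [Real.norm_eq_abs, Real.rpow_two, sq_abs] using key

lemma abs_sub_le_sqrt_integral_deriv_sq_mul_rpow {v : ℝ → ℝ} (hv : ContDiffOn ℝ 1 v (Ioi 0))
    {p a b : ℝ} (hp : 0 ≤ p) (ha : 0 < a) (hab : a ≤ b) :
    |v b - v a| ≤ √(∫ x in a..b, deriv v x ^ 2 * x ^ p) * √(a ^ (-p) * (b - a)) := by
  have hpos : ∀ x ∈ uIcc a b, 0 < x := fun x hx => ha.trans_le (uIcc_of_le hab ▸ hx).1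
  have hv' : ContinuousOn (deriv v) (uIcc a b) :=
    (hv.continuousOn_deriv_of_isOpen isOpen_Ioi le_rfl).mono hpos
  have hpow (q : ℝ) : ContinuousOn (fun x : ℝ => x ^ q) (uIcc a b) :=
    continuousOn_id.rpow_const fun x hx => Or.inl (hpos x hx).ne'
  have hftc : ∫ x in a..b, deriv v x = v b - v a :=
    intervalIntegral.integral_eq_sub_of_hasDerivAt (fun x hx =>
      ((hv.differentiableOn one_ne_zero).differentiableAt
        (Ioi_mem_nhds (hpos x hx))).hasDerivAt) hv'.intervalIntegrable
  have hsplit : ∀ x ∈ uIcc a b,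
      |deriv v x| = |deriv v x * x ^ (p / 2)| * |x ^ (-(p / 2))| := fun x hx => by
    rw [← abs_mul, mul_assoc, ← rpow_add (hpos x hx), add_neg_cancel, rpow_zero, mul_one]
  have hsq : ∀ x ∈ uIcc a b, (deriv v x * x ^ (p / 2)) ^ 2 = deriv v x ^ 2 * x ^ p := fun x hx => by
    rw [mul_pow, ← rpow_mul_natCast (hpos x hx).le]; norm_num
  have hweight : ∫ x in a..b, (x ^ (-(p / 2))) ^ 2 ≤ a ^ (-p) * (b - a) := by
    refine (le_abs_self _).trans ?_
    rw [← abs_of_nonneg (sub_nonneg.2 hab), ← Real.norm_eq_abs]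
    refine intervalIntegral.norm_integral_le_of_norm_le_const fun x hx => ?_
    rw [uIoc_of_le hab] at hx
    rw [← rpow_mul_natCast (ha.trans hx.1).le, Real.norm_of_nonneg (rpow_nonneg (ha.trans hx.1).le _)]
    convert rpow_le_rpow_of_nonpos ha hx.1.le (neg_nonpos.2 hp) using 2
    ring
  calc |v b - v a| = |∫ x in a..b, deriv v x| := by rw [hftc]
    _ ≤ ∫ x in a..b, |deriv v x| := intervalIntegral.abs_integral_le_integral_abs hab
    _ = ∫ x in a..b, |deriv v x * x ^ (p / 2)| * |x ^ (-(p / 2))| :=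
        intervalIntegral.integral_congr hsplit
    _ ≤ √(∫ x in a..b, (deriv v x * x ^ (p / 2)) ^ 2) * √(∫ x in a..b, (x ^ (-(p / 2))) ^ 2) :=
        integral_abs_mul_abs_le_sqrt_mul_sqrt hab (uIcc_of_le hab ▸ hv'.mul (hpow _))
          (uIcc_of_le hab ▸ hpow _)
    _ ≤ √(∫ x in a..b, deriv v x ^ 2 * x ^ p) * √(a ^ (-p) * (b - a)) := by
        rw [intervalIntegral.integral_congr hsq]
        gcongr

lemma abs_sub_le_of_dyadic_deriv_bound {v : ℝ → ℝ} (hv : ContDiffOn ℝ 1 v (Ioi 0))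
    {N M a : ℝ} (hN : 1 ≤ N) (ha : 0 < a)
    (hM : a ^ (-N / 2 + 3) / √(1 + log a ^ 2) *
      √(∫ r in a..2 * a, deriv v r ^ 2 * r ^ (N - 1)) ≤ M) :
    |v (2 * a) - v a| ≤ M * √(1 + log a ^ 2) / a ^ 2 := by
  have hL : 0 < √(1 + log a ^ 2) := by positivity
  have hweight : √(a ^ (-(N - 1)) * (2 * a - a)) = a ^ (-N / 2 + 3) / a ^ 2 := by
    rw [show 2 * a - a = a ^ (1 : ℝ) by rw [rpow_one]; ring, ← rpow_add ha,
      sqrt_eq_rpow, ← rpow_mul ha.le, ← rpow_natCast, ← rpow_sub ha]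
    norm_num; ring_nf
  calc |v (2 * a) - v a|
      ≤ √(∫ r in a..2 * a, deriv v r ^ 2 * r ^ (N - 1)) * √(a ^ (-(N - 1)) * (2 * a - a)) :=
        abs_sub_le_sqrt_integral_deriv_sq_mul_rpow hv (by linarith) ha (by linarith)
    _ = a ^ (-N / 2 + 3) / √(1 + log a ^ 2) *
          √(∫ r in a..2 * a, deriv v r ^ 2 * r ^ (N - 1)) * √(1 + log a ^ 2) / a ^ 2 := by
        rw [hweight]; field_simp
    _ ≤ M * √(1 + log a ^ 2) / a ^ 2 := by gcongr

lemma abs_le_of_abs_sub_le_geometric {u : ℝ → ℝ} (hu : Tendsto u atTop (𝓝 0)) {a c : ℝ}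
    (ha : 0 < a) (h : ∀ k : ℕ, |u (2 ^ (k + 1) * a) - u (2 ^ k * a)| ≤ c * (1 / 2) ^ k) :
    |u a| ≤ 2 * c := by
  have hlim : Tendsto (fun k : ℕ => u (2 ^ k * a)) atTop (𝓝 0) :=
    hu.comp ((tendsto_pow_atTop_atTop_of_one_lt one_lt_two).atTop_mul_const ha)
  have := dist_le_tsum_of_dist_le_of_tendsto₀ _ (fun k => by
    rw [dist_comm, Real.dist_eq]; exact h k) (summable_geometric_two.mul_left c) hlim
  rwa [tsum_mul_left, tsum_geometric_two, pow_zero, one_mul, Real.dist_0_eq_abs, mul_comm] at this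

lemma abs_le_of_dyadic_deriv_bound {v : ℝ → ℝ} (hv : ContDiffOn ℝ 1 v (Ioi 0))
    (hv0 : Tendsto v atTop (𝓝 0)) {N M : ℝ} (hN : 1 ≤ N)
    (hM : ∀ ρ : ℝ, 0 < ρ → ρ ^ (-N / 2 + 3) / √(1 + log ρ ^ 2) *
      √(∫ r in ρ..2 * ρ, deriv v r ^ 2 * r ^ (N - 1)) ≤ M) {a : ℝ} (ha : 0 < a) :
    |v a| ≤ 2 * (M * √(1 + log a ^ 2) / a ^ 2) := by
  have hM0 : 0 ≤ M := le_trans (by positivity) (hM a ha)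
  refine abs_le_of_abs_sub_le_geometric hv0 ha fun k => ?_
  have hk : (0 : ℝ) < 2 ^ k * a := by positivity
  have hlog := sqrt_one_add_log_sq_le_two_pow_mul ha (le_mul_of_one_le_left ha.le
    (one_le_pow₀ one_le_two)) le_rfl (k := k)
  calc |v (2 ^ (k + 1) * a) - v (2 ^ k * a)|
      ≤ M * √(1 + log (2 ^ k * a) ^ 2) / (2 ^ k * a) ^ 2 := by
        rw [pow_succ', mul_assoc]; exact abs_sub_le_of_dyadic_deriv_bound hv hN hk (hM _ hk)
    _ ≤ M * (2 ^ k * √(1 + log a ^ 2)) / (2 ^ k * a) ^ 2 := by gcongr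
    _ = M * √(1 + log a ^ 2) / a ^ 2 * (1 / 2) ^ k := by
        field_simp
        rw [mul_assoc, ← mul_pow]; norm_num

lemma sqrt_integral_sq_mul_rpow_le {f : ℝ → ℝ} {p R B : ℝ} (hp : 0 ≤ p) (hR : 0 < R)
    (hf : ∀ r ∈ Ioc R (2 * R), |f r| ≤ B) :
    √(∫ r in R..2 * R, f r ^ 2 * r ^ p) ≤ B * √((2 * R) ^ p * R) := by
  have hB : 0 ≤ B := (abs_nonneg _).trans (hf (2 * R) ⟨by linarith, le_rfl⟩)
  have hint : ∫ r in R..2 * R, f r ^ 2 * r ^ p ≤ B ^ 2 * (2 * R) ^ p * R := by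
    calc ∫ r in R..2 * R, f r ^ 2 * r ^ p ≤ ‖∫ r in R..2 * R, f r ^ 2 * r ^ p‖ :=
          Real.le_norm_self _
      _ ≤ B ^ 2 * (2 * R) ^ p * |2 * R - R| :=
          intervalIntegral.norm_integral_le_of_norm_le_const fun r hr => by
            rw [uIoc_of_le (by linarith)] at hr
            have hr0 : 0 < r := hR.trans hr.1
            rw [Real.norm_of_nonneg (by positivity), ← sq_abs]
            gcongr
            exacts [hf r hr, hr.2]
      _ = B ^ 2 * (2 * R) ^ p * R := by rw [abs_of_nonneg (by linarith)]; ring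
  calc √(∫ r in R..2 * R, f r ^ 2 * r ^ p) ≤ √(B ^ 2 * (2 * R) ^ p * R) := sqrt_le_sqrt hint
    _ = B * √((2 * R) ^ p * R) := by rw [mul_assoc, sqrt_mul (sq_nonneg B), sqrt_sq hB]

/-- Hardy-type inequality for the logarithmically weighted dyadic norms:
`‖v‖_{Z_{-2}} ≤ C ‖∂_r v‖_{Z_{-3}}` for radial `v` vanishing at infinity.  The norms are
expressed through their defining dyadic bounds (for a radial profile, with weight
`r^{N-1}`). -/
theorem stmt14 (N : ℕ) (hN : 3 ≤ N) :
    ∃ C : ℝ, 0 < C ∧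
      ∀ v : ℝ → ℝ, ContDiffOn ℝ 1 v (Set.Ioi 0) →
        Tendsto v atTop (𝓝 0) →
        ∀ M : ℝ,
          (∀ ρ : ℝ, 0 < ρ →
            ρ ^ (-(N : ℝ) / 2 + 3) / Real.sqrt (1 + Real.log ρ ^ 2) *
              Real.sqrt (∫ r in ρ..2 * ρ, deriv v r ^ 2 * r ^ ((N : ℝ) - 1)) ≤ M) →
          ∀ R : ℝ, 0 < R →
            R ^ (-(N : ℝ) / 2 + 2) / Real.sqrt (1 + Real.log R ^ 2) *
              Real.sqrt (∫ r in R..2 * R, v r ^ 2 * r ^ ((N : ℝ) - 1)) ≤ C * M := by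
  refine ⟨4 * √(2 ^ ((N : ℝ) - 1)), by positivity, fun v hv hv0 M hM R hR => ?_⟩
  have hN1 : (1 : ℝ) ≤ N := by exact_mod_cast (by omega : 1 ≤ N)
  have hM0 : 0 ≤ M := le_trans (by positivity) (hM R hR)
  have hL : 0 < √(1 + log R ^ 2) := by positivity
  have hdecay : ∀ r ∈ Ioc R (2 * R), |v r| ≤ 4 * M * √(1 + log R ^ 2) / R ^ 2 := fun r hr => by
    calc |v r| ≤ 2 * (M * √(1 + log r ^ 2) / r ^ 2) :=
          abs_le_of_dyadic_deriv_bound hv hv0 hN1 hM (hR.trans hr.1)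
      _ ≤ 2 * (M * (2 ^ 1 * √(1 + log R ^ 2)) / R ^ 2) := by
          gcongr
          exacts [sqrt_one_add_log_sq_le_two_pow_mul hR hr.1.le (by linarith [hr.2]), hr.1.le]
      _ = 4 * M * √(1 + log R ^ 2) / R ^ 2 := by ring
  have hvolume : √((2 * R) ^ ((N : ℝ) - 1) * R) = √(2 ^ ((N : ℝ) - 1)) * R ^ ((N : ℝ) / 2) := by
    rw [mul_rpow zero_le_two hR.le, mul_assoc, sqrt_mul (by positivity), ← rpow_add_one hR.ne',
      sqrt_eq_rpow (R ^ _), ← rpow_mul hR.le]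
    ring_nf
  have hscale : R ^ (-(N : ℝ) / 2 + 2) * R ^ ((N : ℝ) / 2) = R ^ 2 := by
    rw [← rpow_add hR, ← rpow_natCast]; ring_nf
  calc _ ≤ R ^ (-(N : ℝ) / 2 + 2) / √(1 + log R ^ 2) *
          (4 * M * √(1 + log R ^ 2) / R ^ 2 * √((2 * R) ^ ((N : ℝ) - 1) * R)) := by
        gcongr
        exact sqrt_integral_sq_mul_rpow_le (by linarith) hR hdecay
    _ = 4 * √(2 ^ ((N : ℝ) - 1)) * M * (R ^ (-(N : ℝ) / 2 + 2) * R ^ ((N : ℝ) / 2) / R ^ 2) *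
          (√(1 + log R ^ 2) / √(1 + log R ^ 2)) := by
        rw [hvolume]; ring
    _ = 4 * √(2 ^ ((N : ℝ) - 1)) * M := by
        rw [hscale, div_self (by positivity), div_self hL.ne', mul_one, mul_one]
end

section
/- Suppose V : ℝ^N → ℝ satisfies |V(x)| ≤ C(1+|x|)^{-4} with N ≥ 7. Then V belongs to L²_t L^{2N/3}_x of any exterior cone region: ∫_ℝ (∫_{|x| ≥ R+|t|} |V(x)|^{2N/3} dx)^{3/(2N) · 2} dt < ∞ for every R > 0, and moreover the norm ‖1_{\{|x| ≥ R+|t|\}} V‖_{L²_t L^{2N/3}_x} tends to 0 as R → ∞. -/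
open Real MeasureTheory Filter Topology

/-!
Raising `|V(x)| ≤ C(1+|x|)^{-4}` to the power `q = 2N/3` gives `|V|^q ≲ (1+|x|)^{-q-2N}`. Since
`(1+|x|)^{-2N}` is integrable on `ℝ^N`, the exterior integral `F(r) = ∫_{|x| ≥ r} |V|^q` is
`O((1+r)^{-q})`, so `F(r)^{3/N} = O((1+r)^{-2})`. Splitting `(1+R+|t|)^{-2}` as
`(1+R)^{-1/2} (1+|t|)^{-3/2}` shows that `t ↦ F(R+|t|)^{3/N}` is integrable with integral
`O((1+R)^{-1/2})`.
-/

lemma le_mul_one_add_rpow_neg_mul {y A r u s a b : ℝ} (hy : 0 ≤ y)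
    (h : y ≤ A * (1 + s) ^ (-(a + b))) (hr : 0 ≤ r) (hu : 0 ≤ u) (hrs : r ≤ s) (hus : u ≤ s)
    (ha : 0 ≤ a) (hb : 0 ≤ b) :
    y ≤ A * (1 + r) ^ (-a) * (1 + u) ^ (-b) := by
  have hs : 0 < 1 + s := by linarith
  have hA : 0 ≤ A := nonneg_of_mul_nonneg_left (hy.trans h) (rpow_pos_of_pos hs _)
  have hsplit : (1 + s) ^ (-(a + b)) ≤ (1 + r) ^ (-a) * (1 + u) ^ (-b) := by
    rw [neg_add, rpow_add hs]
    exact mul_le_mul (rpow_le_rpow_of_nonpos (by linarith) (by linarith) (by linarith))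
      (rpow_le_rpow_of_nonpos (by linarith) (by linarith) (by linarith))
      (rpow_nonneg hs.le _) (rpow_nonneg (by linarith) _)
  rw [mul_assoc]
  exact h.trans (mul_le_mul_of_nonneg_left hsplit hA)

lemma rpow_le_of_le_mul_one_add_rpow_neg {y K r a e : ℝ} (hy : 0 ≤ y) (hr : 0 ≤ r) (he : 0 ≤ e)
    (h : y ≤ K * (1 + r) ^ (-a)) : y ^ e ≤ K ^ e * (1 + r) ^ (-(a * e)) := by
  have hr1 : 0 < 1 + r := by linarith
  have hK : 0 ≤ K := nonneg_of_mul_nonneg_left (hy.trans h) (rpow_pos_of_pos hr1 _)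
  calc y ^ e ≤ (K * (1 + r) ^ (-a)) ^ e := rpow_le_rpow hy h he
    _ = K ^ e * (1 + r) ^ (-(a * e)) := by
      rw [mul_rpow hK (rpow_nonneg hr1.le _), ← rpow_mul hr1.le, neg_mul]

lemma tendsto_mul_one_add_rpow_neg_atTop (c : ℝ) {a : ℝ} (ha : 0 < a) :
    Tendsto (fun R : ℝ => c * (1 + R) ^ (-a)) atTop (𝓝 0) := by
  simpa using ((tendsto_rpow_neg_atTop ha).comp
    (tendsto_atTop_add_const_left _ 1 tendsto_id)).const_mul c

section Exterior

variable {E : Type*} [NormedAddCommGroup E] [MeasurableSpace E] {μ : Measure E}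

lemma antitone_setIntegral_le_norm {f : E → ℝ} (hf0 : ∀ x, 0 ≤ f x) (hf : Integrable f μ) :
    Antitone fun r : ℝ => ∫ x in {x | r ≤ ‖x‖}, f x ∂μ := fun _ _ hrs =>
  setIntegral_mono_set hf.integrableOn (Eventually.of_forall hf0)
    (Eventually.of_forall fun _ hx => hrs.trans hx)

variable [NormedSpace ℝ E] [FiniteDimensional ℝ E] [BorelSpace E] [μ.IsAddHaarMeasure]

lemma integrable_of_le_mul_one_add_rpow_neg {g : E → ℝ} {A b : ℝ}
    (hgm : AEStronglyMeasurable g μ) (hg0 : ∀ x, 0 ≤ g x)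
    (hg : ∀ x, g x ≤ A * (1 + ‖x‖) ^ (-b)) (hb : (Module.finrank ℝ E : ℝ) < b) :
    Integrable g μ :=
  ((integrable_one_add_norm hb).const_mul A).mono' hgm
    (Eventually.of_forall fun x => (norm_of_nonneg (hg0 x)).trans_le (hg x))

lemma setIntegral_le_norm_le {g : E → ℝ} {A a b r : ℝ} (hg0 : ∀ x, 0 ≤ g x)
    (hg : ∀ x, g x ≤ A * (1 + ‖x‖) ^ (-(a + b))) (ha : 0 ≤ a)
    (hb : (Module.finrank ℝ E : ℝ) < b) (hr : 0 ≤ r) :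
    ∫ x in {x | r ≤ ‖x‖}, g x ∂μ ≤ A * (∫ x, (1 + ‖x‖) ^ (-b) ∂μ) * (1 + r) ^ (-a) := by
  have hw := integrable_one_add_norm (μ := μ) hb
  have hb0 : 0 ≤ b := (Nat.cast_nonneg _).trans hb.le
  calc ∫ x in {x | r ≤ ‖x‖}, g x ∂μ
      ≤ ∫ x in {x | r ≤ ‖x‖}, A * (1 + r) ^ (-a) * (1 + ‖x‖) ^ (-b) ∂μ := by
        refine integral_mono_of_nonneg (Eventually.of_forall hg0) (hw.const_mul _).integrableOn
          (ae_restrict_of_forall_mem (measurableSet_le measurable_const measurable_norm)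
            fun x hx => ?_)
        exact le_mul_one_add_rpow_neg_mul (hg0 x) (hg x) hr (norm_nonneg x) hx le_rfl ha hb0
    _ ≤ A * (1 + r) ^ (-a) * ∫ x, (1 + ‖x‖) ^ (-b) ∂μ := by
        have hA : 0 ≤ A := nonneg_of_mul_nonneg_left ((hg0 0).trans (hg 0)) (by simp)
        rw [integral_const_mul]
        exact mul_le_mul_of_nonneg_left
          (setIntegral_le_integral hw (Eventually.of_forall fun x => by positivity))
          (by positivity)
    _ = _ := by ring

end Exterior

section Cone

variable {G : ℝ → ℝ} {K a b R : ℝ}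

lemma comp_add_abs_le (hG0 : ∀ r, 0 ≤ G r) (hG : ∀ r, 0 ≤ r → G r ≤ K * (1 + r) ^ (-(a + b)))
    (ha : 0 ≤ a) (hb : 0 ≤ b) (hR : 0 ≤ R) (t : ℝ) :
    G (R + |t|) ≤ K * (1 + R) ^ (-a) * (1 + ‖t‖) ^ (-b) :=
  le_mul_one_add_rpow_neg_mul (hG0 _) (hG _ (by positivity)) hR (norm_nonneg t)
    (by linarith [abs_nonneg t]) (by rw [Real.norm_eq_abs]; linarith) ha hb

lemma integrable_comp_add_abs (hGm : Measurable G) (hG0 : ∀ r, 0 ≤ G r)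
    (hG : ∀ r, 0 ≤ r → G r ≤ K * (1 + r) ^ (-(a + b))) (ha : 0 ≤ a) (hb : 1 < b) (hR : 0 ≤ R) :
    Integrable fun t => G (R + |t|) :=
  integrable_of_le_mul_one_add_rpow_neg (hGm.comp (by fun_prop)).aestronglyMeasurable
    (fun _ => hG0 _) (comp_add_abs_le hG0 hG ha (by linarith) hR) (by simpa using hb)

lemma integral_comp_add_abs_le (hG0 : ∀ r, 0 ≤ G r)
    (hG : ∀ r, 0 ≤ r → G r ≤ K * (1 + r) ^ (-(a + b))) (ha : 0 ≤ a) (hb : 1 < b) (hR : 0 ≤ R) :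
    ∫ t, G (R + |t|) ≤ K * (∫ t : ℝ, (1 + ‖t‖) ^ (-b)) * (1 + R) ^ (-a) := by
  calc ∫ t, G (R + |t|) ≤ ∫ t : ℝ, K * (1 + R) ^ (-a) * (1 + ‖t‖) ^ (-b) :=
        integral_mono_of_nonneg (Eventually.of_forall fun _ => hG0 _)
          ((integrable_one_add_norm (E := ℝ) (by simpa using hb)).const_mul _)
          (Eventually.of_forall (comp_add_abs_le hG0 hG ha (by linarith) hR))
    _ = _ := by rw [integral_const_mul]; ring

end Cone

/-- A potential with decay `|V(x)| ≤ C(1+|x|)^{-4}` in dimension `N ≥ 7` lies in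
`L²_t L^{2N/3}_x` of every exterior cone `{|x| ≥ R + |t|}`, and the corresponding norm
tends to `0` as `R → ∞`. -/
theorem stmt19 (N : ℕ) (hN : 7 ≤ N) (V : EuclideanSpace ℝ (Fin N) → ℝ)
    (hVm : Measurable V) (C : ℝ)
    (hV : ∀ x, |V x| ≤ C * (1 + ‖x‖) ^ (-4 : ℝ)) :
    (∀ R : ℝ, 0 < R →
      Integrable (fun t : ℝ =>
        (∫ x in {x : EuclideanSpace ℝ (Fin N) | R + |t| ≤ ‖x‖},
            |V x| ^ (2 * (N : ℝ) / 3)) ^ (3 / (2 * (N : ℝ)) * 2))) ∧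
    Tendsto (fun R : ℝ =>
        Real.sqrt (∫ t : ℝ,
          (∫ x in {x : EuclideanSpace ℝ (Fin N) | R + |t| ≤ ‖x‖},
              |V x| ^ (2 * (N : ℝ) / 3)) ^ (3 / (2 * (N : ℝ)) * 2)))
      atTop (𝓝 0) := by
  have hN0 : (0 : ℝ) < N := by exact_mod_cast (by omega : 0 < N)
  set q : ℝ := 2 * (N : ℝ) / 3
  set e : ℝ := 3 / (2 * (N : ℝ)) * 2
  have hqe : q * e = 1 / 2 + 3 / 2 := by simp only [q, e]; field_simp; ring
  have hdim : (Module.finrank ℝ (EuclideanSpace ℝ (Fin N)) : ℝ) < 2 * N := by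
    rw [finrank_euclideanSpace_fin]; linarith
  have hpt : ∀ x, |V x| ^ q ≤ C ^ q * (1 + ‖x‖) ^ (-(q + 2 * N)) := fun x => by
    have h := rpow_le_of_le_mul_one_add_rpow_neg (abs_nonneg _) (norm_nonneg x) (by positivity)
      (hV x) (e := q)
    rwa [show 4 * q = q + 2 * N by ring] at h
  have hint : Integrable fun x => |V x| ^ q :=
    integrable_of_le_mul_one_add_rpow_neg (hVm.abs.pow_const q).aestronglyMeasurable
      (fun x => by positivity) hpt (by linarith [show 0 < q by positivity])
  set F : ℝ → ℝ := fun r => ∫ x in {x : EuclideanSpace ℝ (Fin N) | r ≤ ‖x‖}, |V x| ^ q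
  have hF0 : ∀ r, 0 ≤ F r ^ e := fun r =>
    rpow_nonneg (integral_nonneg fun x => by positivity) e
  have hFm : Measurable fun r => F r ^ e :=
    (antitone_setIntegral_le_norm (fun x => by positivity) hint).measurable.pow_const e
  have hdecay : ∀ r, 0 ≤ r → F r ^ e ≤
      (C ^ q * ∫ x : EuclideanSpace ℝ (Fin N), (1 + ‖x‖) ^ (-(2 * (N : ℝ)))) ^ e *
        (1 + r) ^ (-(1 / 2 + 3 / 2 : ℝ)) := fun r hr => by
    have htail := setIntegral_le_norm_le (μ := volume) (fun x => by positivity) hpt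
      (by positivity) hdim hr
    have h := rpow_le_of_le_mul_one_add_rpow_neg (e := e)
      (integral_nonneg fun x => by positivity) hr (by positivity) htail
    rwa [hqe] at h
  refine ⟨fun R hR => integrable_comp_add_abs hFm hF0 hdecay (by norm_num) (by norm_num) hR.le, ?_⟩
  simpa using (squeeze_zero' (Eventually.of_forall fun R => integral_nonneg fun t => hF0 _)
    ((eventually_ge_atTop 0).mono fun R hR =>
      integral_comp_add_abs_le hF0 hdecay (by norm_num) (by norm_num) hR)
    (tendsto_mul_one_add_rpow_neg_atTop _ (by norm_num))).sqrt
end
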